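/- Let u be a C² solution of Δu + f(u) = 0 on an open set Ω ⊂ ℝ², with f of class C¹, and define P(x) = |∇u(x)|² + 2∫₀^{u(x)} f(s) ds. Then at every point of Ω where ∇u ≠ 0, P satisfies the elliptic equation ΔP + |∇u|^{-2} ⟨L, ∇P⟩ = 0, where L_i = −P_{,i} + 2 f(u) u_{,i}. -/

import Mathlib

/-!
Differentiating `P` twice, the third derivatives of `u` enter only through
`∇Δu = -f'(u) ∇u`, which cancels the `f'` terms; hence `ΔP = 2 |D²u|² - 2 f(u)²` in any
dimension, while `∇P = 2 D²u ∇u + 2 f(u) ∇u`, so that `L = -2 D²u ∇u`. For a symmetric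
`2 × 2` matrix `H` and `v ∈ ℝ²` one has
`|v|² |H|² = |v|² (tr H)² + 2 |H v|² - 2 (tr H) ⟨v, H v⟩`; with `H = D²u`, `v = ∇u` and
`tr H = -f(u)` this is exactly `|∇u|² ΔP + ⟨L, ∇P⟩ = 0`.
-/

noncomputable section

/-- Partial derivative of `u` in the `i`-th coordinate direction. -/
def pd {n : ℕ} (u : EuclideanSpace ℝ (Fin n) → ℝ) (i : Fin n)
    (x : EuclideanSpace ℝ (Fin n)) : ℝ :=
  fderiv ℝ u x (EuclideanSpace.single i 1)

/-- The Laplacian as the sum of second partial derivatives. -/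
def lap {n : ℕ} (u : EuclideanSpace ℝ (Fin n) → ℝ) (x : EuclideanSpace ℝ (Fin n)) : ℝ :=
  ∑ i, pd (pd u i) i x

open Filter Topology Finset

section PartialDerivatives

variable {n : ℕ} {u v g h : EuclideanSpace ℝ (Fin n) → ℝ} {x : EuclideanSpace ℝ (Fin n)}
  {i j : Fin n}

theorem Filter.EventuallyEq.pd_eq (huv : u =ᶠ[𝓝 x] v) : pd u i x = pd v i x := by
  rw [pd, pd, huv.fderiv_eq]

theorem ContDiffAt.pd {k m : WithTop ℕ∞} (hu : ContDiffAt ℝ k u x) (hmk : m + 1 ≤ k) :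
    ContDiffAt ℝ m (pd u i) x :=
  (hu.fderiv_right hmk).clm_apply contDiffAt_const

theorem pd_add (hg : DifferentiableAt ℝ g x) (hh : DifferentiableAt ℝ h x) :
    pd (fun y => g y + h y) i x = pd g i x + pd h i x := by
  rw [pd, fderiv_fun_add hg hh]; rfl

theorem pd_neg : pd (fun y => -g y) i x = -pd g i x := by
  rw [pd, fderiv_fun_neg]; rfl

theorem pd_mul (hg : DifferentiableAt ℝ g x) (hh : DifferentiableAt ℝ h x) :
    pd (fun y => g y * h y) i x = pd g i x * h x + g x * pd h i x := by
  rw [pd, fderiv_fun_mul hg hh]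
  show g x * pd h i x + h x * pd g i x = _
  ring

theorem pd_const_mul (c : ℝ) (hg : DifferentiableAt ℝ g x) :
    pd (fun y => c * g y) i x = c * pd g i x := by
  rw [pd, fderiv_const_mul hg]; rfl

theorem pd_sq (hg : DifferentiableAt ℝ g x) :
    pd (fun y => g y ^ 2) i x = 2 * g x * pd g i x := by
  simp only [pow_two, pd_mul hg hg]
  ring

theorem pd_sum {ι : Type*} (s : Finset ι) {g : ι → EuclideanSpace ℝ (Fin n) → ℝ}
    (hg : ∀ k ∈ s, DifferentiableAt ℝ (g k) x) :
    pd (fun y => ∑ k ∈ s, g k y) i x = ∑ k ∈ s, pd (g k) i x := by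
  rw [pd, fderiv_fun_sum hg, _root_.sum_apply]; rfl

theorem pd_comp {f : ℝ → ℝ} (hf : DifferentiableAt ℝ f (u x)) (hu : DifferentiableAt ℝ u x) :
    pd (fun y => f (u y)) i x = deriv f (u x) * pd u i x := by
  have hd : HasFDerivAt (fun y => f (u y)) (deriv f (u x) • fderiv ℝ u x) x :=
    hf.hasDerivAt.comp_hasFDerivAt x hu.hasFDerivAt
  rw [pd, hd.fderiv]; rfl

theorem pd_integral {f : ℝ → ℝ} (hf : Continuous f) (hu : DifferentiableAt ℝ u x) :
    pd (fun y => ∫ s in (0:ℝ)..u y, f s) i x = f (u x) * pd u i x := by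
  have hd : HasFDerivAt (fun y => ∫ s in (0:ℝ)..u y, f s) (f (u x) • fderiv ℝ u x) x :=
    (hf.integral_hasStrictDerivAt 0 (u x)).hasDerivAt.comp_hasFDerivAt x hu.hasFDerivAt
  rw [pd, hd.fderiv]; rfl

theorem pd_comm (hu : ContDiffAt ℝ 2 u x) : pd (pd u i) j x = pd (pd u j) i x := by
  have hd : DifferentiableAt ℝ (fderiv ℝ u) x :=
    (hu.fderiv_right (m := 1) le_rfl).differentiableAt one_ne_zero
  have hsnd : ∀ k l : Fin n, pd (pd u k) l x =
      fderiv ℝ (fderiv ℝ u) x (EuclideanSpace.single l 1) (EuclideanSpace.single k 1) := by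
    intro k l
    rw [pd, show pd u k = fun y => fderiv ℝ u y (EuclideanSpace.single k 1) from rfl,
      fderiv_clm_apply hd (differentiableAt_const _)]
    simp
  rw [hsnd, hsnd,
    (hu.isSymmSndFDerivAt (by simp [minSmoothness_of_isRCLikeNormedField])).eq]

theorem lap_pd (hu : ContDiffAt ℝ 3 u x) : lap (pd u j) x = pd (lap u) j x := by
  have hsymm : ∀ k, pd (pd u j) k =ᶠ[𝓝 x] pd (pd u k) j := fun k =>
    (hu.eventually (by simp)).mono fun y hy => pd_comm (hy.of_le (by norm_num))
  have hdiff : ∀ k ∈ univ, DifferentiableAt ℝ (pd (pd u k) k) x := fun k _ =>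
    ((hu.pd (m := 2) (by norm_num)).pd (m := 1) (by norm_num)).differentiableAt one_ne_zero
  unfold lap
  rw [pd_sum univ hdiff]
  refine sum_congr rfl fun k _ => ?_
  rw [(hsymm k).pd_eq, pd_comm (hu.pd (m := 2) (by norm_num))]

end PartialDerivatives

section PFunction

variable {n : ℕ} {f : ℝ → ℝ} {u : EuclideanSpace ℝ (Fin n) → ℝ} {x : EuclideanSpace ℝ (Fin n)}

def pFunction (f : ℝ → ℝ) (u : EuclideanSpace ℝ (Fin n) → ℝ) (x : EuclideanSpace ℝ (Fin n)) :
    ℝ :=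
  (∑ i, pd u i x ^ 2) + 2 * ∫ s in (0:ℝ)..u x, f s

theorem pd_pFunction (hf : Continuous f) (hu : ContDiffAt ℝ 2 u x) (k : Fin n) :
    pd (pFunction f u) k x =
      2 * ∑ j, pd u j x * pd (pd u j) k x + 2 * f (u x) * pd u k x := by
  have hdu : DifferentiableAt ℝ u x := hu.differentiableAt (by norm_num)
  have hdpd : ∀ j, DifferentiableAt ℝ (pd u j) x := fun j =>
    (hu.pd (m := 1) (by norm_num)).differentiableAt one_ne_zero
  have hdint : DifferentiableAt ℝ (fun y => ∫ s in (0:ℝ)..u y, f s) x :=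
    ((hf.integral_hasStrictDerivAt 0 (u x)).hasDerivAt.comp_hasFDerivAt x
      hdu.hasFDerivAt).differentiableAt
  unfold pFunction
  rw [pd_add (g := fun y => ∑ j, pd u j y ^ 2)
    (DifferentiableAt.fun_sum fun j _ => (hdpd j).pow 2) (hdint.const_mul 2),
    pd_sum univ (g := fun j y => pd u j y ^ 2) fun j _ => (hdpd j).pow 2,
    pd_const_mul 2 hdint, pd_integral hf hdu, mul_sum]
  simp only [pd_sq (hdpd _), mul_assoc]

theorem pd_pd_pFunction_self (hf : Differentiable ℝ f) (hu : ContDiffAt ℝ 3 u x) (k : Fin n) :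
    pd (pd (pFunction f u) k) k x =
      2 * ∑ j, pd (pd u j) k x ^ 2 + 2 * ∑ j, pd u j x * pd (pd (pd u j) k) k x
        + 2 * deriv f (u x) * pd u k x ^ 2 + 2 * f (u x) * pd (pd u k) k x := by
  have hdu : DifferentiableAt ℝ u x := hu.differentiableAt (by norm_num)
  have hdfu : DifferentiableAt ℝ (fun y => f (u y)) x := (hf (u x)).comp x hdu
  have hdpd : ∀ j, DifferentiableAt ℝ (pd u j) x := fun j =>
    (hu.pd (m := 2) (by norm_num)).differentiableAt (by norm_num)
  have hdpd2 : ∀ j, DifferentiableAt ℝ (pd (pd u j) k) x := fun j =>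
    ((hu.pd (m := 2) (by norm_num)).pd (m := 1) (by norm_num)).differentiableAt one_ne_zero
  have hdsum : ∀ j ∈ univ, DifferentiableAt ℝ (fun y => pd u j y * pd (pd u j) k y) x :=
    fun j _ => (hdpd j).mul (hdpd2 j)
  have hgrad : pd (pFunction f u) k =ᶠ[𝓝 x]
      fun y => 2 * ∑ j, pd u j y * pd (pd u j) k y + 2 * f (u y) * pd u k y :=
    (hu.eventually (by simp)).mono fun y hy =>
      pd_pFunction hf.continuous (hy.of_le (by norm_num)) k
  rw [hgrad.pd_eq, pd_add (g := fun y => 2 * ∑ j, pd u j y * pd (pd u j) k y)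
    (h := fun y => 2 * f (u y) * pd u k y) ((DifferentiableAt.fun_sum hdsum).const_mul 2)
    ((hdfu.const_mul 2).mul (hdpd k)), pd_const_mul 2 (DifferentiableAt.fun_sum hdsum),
    pd_sum univ hdsum, pd_mul (hdfu.const_mul 2) (hdpd k), pd_const_mul 2 hdfu,
    pd_comp (hf (u x)) hdu]
  simp only [pd_mul (hdpd _) (hdpd2 _), sum_add_distrib, ← pow_two]
  ring

theorem lap_pd_eq_of_lap_add_comp_eq_zero (hf : Differentiable ℝ f) (hu : ContDiffAt ℝ 3 u x)
    (hsol : ∀ᶠ y in 𝓝 x, lap u y + f (u y) = 0) (j : Fin n) :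
    lap (pd u j) x = -(deriv f (u x) * pd u j x) := by
  have hlap : lap u =ᶠ[𝓝 x] fun y => -f (u y) := hsol.mono fun y hy => by linarith
  rw [lap_pd hu, hlap.pd_eq, pd_neg, pd_comp (hf (u x)) (hu.differentiableAt (by norm_num))]

theorem lap_pFunction (hf : Differentiable ℝ f) (hu : ContDiffAt ℝ 3 u x)
    (hsol : ∀ᶠ y in 𝓝 x, lap u y + f (u y) = 0) :
    lap (pFunction f u) x = 2 * ∑ j, ∑ k, pd (pd u j) k x ^ 2 - 2 * f (u x) ^ 2 := by
  have hmixed : ∑ k, ∑ j, pd u j x * pd (pd (pd u j) k) k x =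
      -(deriv f (u x) * ∑ j, pd u j x ^ 2) :=
    calc ∑ k, ∑ j, pd u j x * pd (pd (pd u j) k) k x
        _ = ∑ j, pd u j x * lap (pd u j) x := by rw [sum_comm]; simp only [lap, mul_sum]
        _ = ∑ j, -(deriv f (u x) * pd u j x ^ 2) := sum_congr rfl fun j _ => by
          rw [lap_pd_eq_of_lap_add_comp_eq_zero hf hu hsol]; ring
        _ = -(deriv f (u x) * ∑ j, pd u j x ^ 2) := by rw [sum_neg_distrib, mul_sum]
  have hlapu : ∑ k, pd (pd u k) k x = -f (u x) := by
    linarith [hsol.self_of_nhds, show lap u x = ∑ k, pd (pd u k) k x from rfl]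
  calc lap (pFunction f u) x = ∑ k, pd (pd (pFunction f u) k) k x := rfl
    _ = 2 * ∑ k, ∑ j, pd (pd u j) k x ^ 2 + 2 * ∑ k, ∑ j, pd u j x * pd (pd (pd u j) k) k x
        + 2 * deriv f (u x) * ∑ k, pd u k x ^ 2 + 2 * f (u x) * ∑ k, pd (pd u k) k x := by
      simp only [pd_pd_pFunction_self hf hu, sum_add_distrib, ← mul_sum]
    _ = 2 * ∑ j, ∑ k, pd (pd u j) k x ^ 2 - 2 * f (u x) ^ 2 := by
      rw [hmixed, hlapu, sum_comm]
      ring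

end PFunction

theorem sum_sq_mul_sum_hessian_sq_fin_two (v : Fin 2 → ℝ) (H : Fin 2 → Fin 2 → ℝ)
    (hH : H 0 1 = H 1 0) :
    (∑ i, v i ^ 2) * ∑ i, ∑ j, H i j ^ 2 =
      (∑ i, v i ^ 2) * (∑ i, H i i) ^ 2 + 2 * ∑ k, (∑ i, v i * H i k) ^ 2
        - 2 * (∑ i, H i i) * ∑ i, ∑ j, v i * v j * H i j := by
  simp only [Fin.sum_univ_two, hH]
  ring

/-- The P-function `P = |∇u|² + 2∫₀ᵘ f` of a solution of `Δu + f(u) = 0` on an open set of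
`ℝ²` satisfies `ΔP + |∇u|⁻² ⟨L, ∇P⟩ = 0` wherever `∇u ≠ 0`, where
`Lᵢ = −P_{,i} + 2 f(u) u_{,i}`. -/
theorem stmt3 (Ω : Set (EuclideanSpace ℝ (Fin 2))) (hΩ : IsOpen Ω)
    (f : ℝ → ℝ) (hf : ContDiff ℝ 1 f)
    (u : EuclideanSpace ℝ (Fin 2) → ℝ) (hu : ContDiffOn ℝ 3 u Ω)
    (heq : ∀ x ∈ Ω, lap u x + f (u x) = 0)
    (P : EuclideanSpace ℝ (Fin 2) → ℝ)
    (hP : P = fun x => (∑ i, (pd u i x) ^ 2) + 2 * ∫ s in (0:ℝ)..(u x), f s)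
    (L : Fin 2 → EuclideanSpace ℝ (Fin 2) → ℝ)
    (hL : ∀ i x, L i x = -(pd P i x) + 2 * f (u x) * pd u i x) :
    ∀ x ∈ Ω, (∑ i, (pd u i x) ^ 2) ≠ 0 →
      lap P x + (∑ i, L i x * pd P i x) / (∑ i, (pd u i x) ^ 2) = 0 := by
  intro x hx hgrad
  replace hP : P = pFunction f u := hP
  subst hP
  have hux : ContDiffAt ℝ 3 u x := hu.contDiffAt (hΩ.mem_nhds hx)
  have hux2 : ContDiffAt ℝ 2 u x := hux.of_le (by norm_num)
  have hdP := pd_pFunction (f := f) hf.continuous hux2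
  have hLx : ∀ k, L k x = -2 * ∑ j, pd u j x * pd (pd u j) k x := fun k => by
    rw [hL, hdP]; ring
  have hf_trace : f (u x) = -∑ i, pd (pd u i) i x := by
    linarith [heq x hx, show lap u x = ∑ i, pd (pd u i) i x from rfl]
  have hid := sum_sq_mul_sum_hessian_sq_fin_two (fun i => pd u i x)
    (fun i j => pd (pd u i) j x) (pd_comm hux2)
  rw [lap_pFunction (hf.differentiable one_ne_zero) hux
    (eventually_of_mem (hΩ.mem_nhds hx) heq)]
  field_simp
  simp only [hLx, hdP, hf_trace]
  simp only [Fin.sum_univ_two] at hid ⊢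
  linear_combination 2 * hid
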